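/- Let n ≥ 1, γ ∈ (0,1), and b ∈ ℂ with |b| = 1. Define the polynomial P(z) = z^{n+1} − conj(b) − ((1 − conj(b))·γ / (1 + (n−1)·γ)) · Σ_{j=1}^{n} z^j. Then P is paraorthogonal with respect to the measure (1−γ)·dθ/(2π) + γ·δ(θ−0) on [0,2π): for every polynomial g with deg g ≤ n and g(0) = 0, (1−γ)·(1/(2π))·∫₀^{2π} P(e^{iθ})·conj(g(e^{iθ})) dθ + γ·P(1)·conj(g(1)) = 0. -/

import Mathlib

/-! On the unit circle `conj z = z⁻¹`, so `(1/2π) ∫ p(e^{iθ}) conj (q(e^{iθ})) dθ = Σₖ pₖ conj qₖ`.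
With `A = (1 - conj b) γ / (1 + (n - 1) γ)` the coefficients of `P` in degrees `1, …, n` all equal
`-A`, and `g(0) = 0`, `deg g ≤ n` make the Lebesgue part `-(1 - γ) A conj (g 1)`. The point mass
adds `γ P(1) conj (g 1)` with `P(1) = 1 - conj b - n A`, and `A` is exactly the value for which
`-(1 - γ) A + γ (1 - conj b - n A) = 0`. -/

open MeasureTheory Polynomial Real ComplexConjugate

section

open Complex

theorem integral_exp_int_mul_I (m : ℤ) :
    ∫ θ : ℝ in 0..2 * π, exp (m * θ * I) = if m = 0 then (2 * π : ℂ) else 0 := by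
  split_ifs with hm
  · simp [hm]
  · have hmI : (m : ℂ) * I ≠ 0 := by simp [hm, I_ne_zero]
    simp_rw [mul_right_comm _ _ I]
    rw [integral_exp_mul_complex hmI]
    have hperiod : (m : ℂ) * I * ((2 * π : ℝ) : ℂ) = m * (2 * π * I) := by push_cast; ring
    rw [hperiod, exp_int_mul_two_pi_mul_I]
    simp

theorem integral_exp_pow_mul_conj_exp_pow (m k : ℕ) :
    ∫ θ : ℝ in 0..2 * π, exp (θ * I) ^ m * conj (exp (θ * I)) ^ k =
      if m = k then (2 * π : ℂ) else 0 := by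
  have h : ∀ θ : ℝ,
      exp (θ * I) ^ m * conj (exp (θ * I)) ^ k = exp (((m - k : ℤ) : ℂ) * θ * I) := by
    intro θ
    rw [← exp_conj, ← Complex.exp_nat_mul, ← Complex.exp_nat_mul, ← Complex.exp_add]
    congr 1
    simp only [map_mul, conj_ofReal, conj_I, mul_neg, Int.cast_sub, Int.cast_natCast]
    ring
  simp_rw [h, integral_exp_int_mul_I, sub_eq_zero, Nat.cast_inj]

theorem integral_eval_mul_conj_exp_pow (p : ℂ[X]) (k : ℕ) :
    ∫ θ : ℝ in 0..2 * π, p.eval (exp (θ * I)) * conj (exp (θ * I)) ^ k =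
      2 * π * p.coeff k := by
  have hk : k ∈ Finset.range (p.natDegree + k + 1) := by simp
  have hdeg : p.natDegree < p.natDegree + k + 1 := by omega
  simp_rw [eval_eq_sum_range' hdeg, Finset.sum_mul, mul_assoc]
  rw [intervalIntegral.integral_finsetSum fun _ _ =>
    Continuous.intervalIntegrable (by fun_prop) _ _]
  simp_rw [intervalIntegral.integral_const_mul, integral_exp_pow_mul_conj_exp_pow, mul_ite,
    mul_zero, Finset.sum_ite_eq' _ _ _, if_pos hk]
  ring

theorem integral_eval_mul_conj_eval (p q : ℂ[X]) :
    ∫ θ : ℝ in 0..2 * π, p.eval (exp (θ * I)) * conj (q.eval (exp (θ * I))) =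
      2 * π * ∑ k ∈ Finset.range (q.natDegree + 1), p.coeff k * conj (q.coeff k) := by
  have h : ∀ θ : ℝ, p.eval (exp (θ * I)) * conj (q.eval (exp (θ * I))) =
      ∑ k ∈ Finset.range (q.natDegree + 1),
        conj (q.coeff k) * (p.eval (exp (θ * I)) * conj (exp (θ * I)) ^ k) := by
    intro θ
    rw [eval_eq_sum_range (p := q), map_sum, Finset.mul_sum]
    simp only [map_mul, map_pow]
    exact Finset.sum_congr rfl fun _ _ => by ring
  simp_rw [h]
  rw [intervalIntegral.integral_finsetSum fun _ _ =>
    Continuous.intervalIntegrable (by fun_prop) _ _]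
  simp_rw [intervalIntegral.integral_const_mul, integral_eval_mul_conj_exp_pow, Finset.mul_sum]
  exact Finset.sum_congr rfl fun _ _ => by ring

end

theorem coeff_X_pow_sub_C_sub_C_mul_sum_X_pow {R : Type*} [CommRing R] {n k : ℕ} (a c : R)
    (hk₁ : 1 ≤ k) (hkn : k ≤ n) :
    (X ^ (n + 1) - C c - C a * ∑ j ∈ Finset.Icc 1 n, X ^ j : R[X]).coeff k = -a := by
  have hk : k ∈ Finset.Icc 1 n := Finset.mem_Icc.mpr ⟨hk₁, hkn⟩
  simp [coeff_X_pow, coeff_C, finsetSum_coeff, hk, (Nat.lt_succ_of_le hkn).ne,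
    Nat.one_le_iff_ne_zero.mp hk₁]

theorem lebesgue_plus_mass_point_popuc_general
    (n : ℕ) (γ : ℝ) (hγ : γ ∈ Set.Ioo (0 : ℝ) 1)
    (b : ℂ)
    (P : ℂ → ℂ)
    (hP : ∀ z, P z = z ^ (n + 1) - starRingEnd ℂ b -
      ((1 - starRingEnd ℂ b) * (γ : ℂ) / (1 + ((n : ℂ) - 1) * (γ : ℂ))) *
        ∑ j ∈ Finset.Icc 1 n, z ^ j)
    (g : Polynomial ℂ) (hg : g.natDegree ≤ n) (hg0 : g.eval 0 = 0) :
    ((1 - γ : ℝ) : ℂ) * (1 / (2 * (π : ℂ))) *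
        (∫ θ in Set.Ico 0 (2 * π),
          P (Complex.exp (θ * Complex.I)) *
            (starRingEnd ℂ) (g.eval (Complex.exp (θ * Complex.I)))) +
      (γ : ℂ) * P 1 * (starRingEnd ℂ) (g.eval 1) = 0 := by
  set A := (1 - conj b) * (γ : ℂ) / (1 + ((n : ℂ) - 1) * (γ : ℂ))
  set Q : ℂ[X] := X ^ (n + 1) - C (conj b) - C A * ∑ j ∈ Finset.Icc 1 n, X ^ j
  have hPQ : ∀ z, P z = Q.eval z := by simp [hP, Q, eval_finsetSum]
  have hQ1 : Q.eval 1 = 1 - conj b - A * n := by simp [Q, eval_finsetSum]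
  have hQg : ∑ k ∈ Finset.range (g.natDegree + 1), Q.coeff k * conj (g.coeff k) =
      -A * conj (g.eval 1) := by
    rw [eval_eq_sum_range, map_sum, Finset.mul_sum]
    refine Finset.sum_congr rfl fun k hk => ?_
    rcases Nat.eq_zero_or_pos k with rfl | hk₁
    · simp [coeff_zero_eq_eval_zero, hg0]
    · rw [coeff_X_pow_sub_C_sub_C_mul_sum_X_pow _ _ hk₁ (by simp at hk; omega)]
      simp
  have hA : A * (1 + ((n : ℂ) - 1) * γ) = (1 - conj b) * γ := by
    refine div_mul_cancel₀ _ ?_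
    have : (0 : ℝ) < 1 + (n - 1) * γ := by
      nlinarith [hγ.1, hγ.2, (n.cast_nonneg : (0 : ℝ) ≤ n)]
    exact_mod_cast this.ne'
  simp_rw [hPQ]
  rw [restrict_Ico_eq_restrict_Ioc, ← intervalIntegral.integral_of_le two_pi_pos.le,
    integral_eval_mul_conj_eval, hQg, hQ1]
  have hπ : (π : ℂ) ≠ 0 := Complex.ofReal_ne_zero.mpr pi_ne_zero
  field_simp
  push_cast
  linear_combination (-conj (g.eval 1)) * hA

/-- The polynomial `P(z) = z^{n+1} − conj(b) − ((1 − conj(b)) γ / (1 + (n−1) γ)) Σ_{j=1}^n z^j`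
is paraorthogonal with respect to the measure `(1−γ) dθ/(2π) + γ δ(θ−0)` on `[0, 2π)`. -/
theorem lebesgue_plus_mass_point_popuc
    (n : ℕ) (hn : 1 ≤ n) (γ : ℝ) (hγ : γ ∈ Set.Ioo (0 : ℝ) 1)
    (b : ℂ) (hb : ‖b‖ = 1)
    (P : ℂ → ℂ)
    (hP : ∀ z, P z = z ^ (n + 1) - starRingEnd ℂ b -
      ((1 - starRingEnd ℂ b) * (γ : ℂ) / (1 + ((n : ℂ) - 1) * (γ : ℂ))) *
        ∑ j ∈ Finset.Icc 1 n, z ^ j)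
    (g : Polynomial ℂ) (hg : g.natDegree ≤ n) (hg0 : g.eval 0 = 0) :
    ((1 - γ : ℝ) : ℂ) * (1 / (2 * (π : ℂ))) *
        (∫ θ in Set.Ico 0 (2 * π),
          P (Complex.exp (θ * Complex.I)) *
            (starRingEnd ℂ) (g.eval (Complex.exp (θ * Complex.I)))) +
      (γ : ℂ) * P 1 * (starRingEnd ℂ) (g.eval 1) = 0 :=
  lebesgue_plus_mass_point_popuc_general n γ hγ b P hP g hg hg0
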